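/- Let P be a convex d-polytope in E^d, and for sufficiently large k let y_{v,k} > 0 (v ∈ vert(P)) be the unique scalars with f_k(w) = 1 for all vertices w, where f_k(x) := Σ_{v ∈ vert(P)} y_{v,k} ((1/deg(v)) Σ_{F facet containing v} (1 − q_F(x))^{2k})^{2k}. Then the semi-algebraic sets S_k := {x ∈ E^d : f_k(x) ≤ 1} converge to P in the Hausdorff distance as k → +∞; moreover P ⊆ S_k for these k. -/

import Mathlib

noncomputable section

open Metric Set Finset Matrix
open scoped RealInnerProductSpace BigOperators Classical

namespace AverkovHenk

abbrev E (d : ℕ) := EuclideanSpace ℝ (Fin d)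

/-- Support function `h(P,u)` of `P` in direction `u`. -/
def supp {d : ℕ} (P : Set (E d)) (u : E d) : ℝ :=
  sSup ((fun x => ⟪u, x⟫) '' P)

/-- The normalized affine function `q_F` of the facet with outward unit normal `u`. -/
def qf {d : ℕ} (P : Set (E d)) (u : E d) (x : E d) : ℝ :=
  (supp P u - ⟪u, x⟫) / Metric.diam P

/-- The exposed face of `P` in direction `u`. -/
def faceOf {d : ℕ} (P : Set (E d)) (u : E d) : Set (E d) :=
  {x ∈ P | ⟪u, x⟫ = supp P u}

/-- `u` is an outward unit normal of a facet (a `(d-1)`-dimensional face) of `P`. -/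
def IsFacetNormal {d : ℕ} (P : Set (E d)) (u : E d) : Prop :=
  ‖u‖ = 1 ∧ Module.finrank ℝ ↥(vectorSpan ℝ (faceOf P u)) = d - 1

/-- The vertices of `P`, i.e. its extreme points. -/
def vertices {d : ℕ} (P : Set (E d)) : Set (E d) := Set.extremePoints ℝ P

/-- The `l`-th elementary symmetric function of `y_1, …, y_m`. -/
def esymm {m : ℕ} (y : Fin m → ℝ) (l : ℕ) : ℝ :=
  ∑ J ∈ Finset.powersetCard l (Finset.univ : Finset (Fin m)), ∏ j ∈ J, y j

/-- A presentation of a convex `d`-polytope `P ⊆ E^d` by the `m` outward unit normals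
`u 0, …, u (m-1)` of its facets, together with the induced representation
`P = {x | q_j(x) ≥ 0 for all j}`. -/
structure FacetRep (d m : ℕ) where
  P : Set (E d)
  u : Fin m → E d
  convex : Convex ℝ P
  compact : IsCompact P
  fulldim : (interior P).Nonempty
  inj : Function.Injective u
  facet : ∀ j, IsFacetNormal P (u j)
  complete : ∀ w : E d, IsFacetNormal P w → ∃ j, w = u j
  rep : P = {x | ∀ j, 0 ≤ qf P (u j) x}

namespace FacetRep

variable {d m : ℕ}

/-- The vector `q(x) = (q_1(x), …, q_m(x))`. -/
def q (R : FacetRep d m) (x : E d) : Fin m → ℝ := fun j => qf R.P (R.u j) x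

/-- The indices of the facets containing the point `v`. -/
def act (R : FacetRep d m) (v : E d) : Finset (Fin m) :=
  Finset.univ.filter fun j => R.q v j = 0

/-- The polytope is simple: each vertex lies on exactly `d` facets. -/
def Simple (R : FacetRep d m) : Prop :=
  ∀ v ∈ vertices R.P, (R.act v).card = d

/-- The enlarged polytope `P_ε`. -/
def Peps (R : FacetRep d m) (ε : ℝ) : Set (E d) := {x | ∀ j, -ε ≤ R.q x j}

/-- The box `Π_{v,ε} = {x : |q_v(x)|_∞ ≤ ε}`. -/
def Piv (R : FacetRep d m) (v : E d) (ε : ℝ) : Set (E d) :=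
  {x | ∀ j ∈ R.act v, |R.q x j| ≤ ε}

/-- The cone `C_v = {x : -σ_1(q_v(x)) ≥ (2/3)|q_v(x)|}` (Euclidean norm). -/
def Cv (R : FacetRep d m) (v : E d) : Set (E d) :=
  {x | (2/3) * Real.sqrt (∑ j ∈ R.act v, (R.q x j)^2) ≤ -(∑ j ∈ R.act v, R.q x j)}

/-- The polytope `P^v_{ε,δ}`. -/
def Pv (R : FacetRep d m) (v : E d) (ε δ : ℝ) : Set (E d) :=
  {x | (∀ j ∈ R.act v, -ε ≤ R.q x j) ∧ ∀ j ∉ R.act v, δ ≤ R.q x j}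

/-- `γ = max{1 - q_F(v) : F a facet, v a vertex not on F}`. -/
def gam (R : FacetRep d m) : ℝ :=
  sSup {c | ∃ v ∈ vertices R.P, ∃ j, R.q v j ≠ 0 ∧ c = 1 - R.q v j}

/-- The polynomial `f_k` built from weights `y_v` over the vertex set `V`. -/
def fk (R : FacetRep d m) (V : Finset (E d)) (y : ↥V → ℝ) (k : ℕ) (x : E d) : ℝ :=
  ∑ v : ↥V, y v * ((∑ j ∈ R.act v.1, (1 - R.q x j)^(2*k)) / (R.act v.1).card)^(2*k)

/-- The matrix `A_k` indexed by the vertex set `V`. -/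
def Ak (R : FacetRep d m) (V : Finset (E d)) (k : ℕ) : Matrix ↥V ↥V ℝ :=
  Matrix.of fun w v : ↥V => ((∑ j ∈ R.act v.1, (1 - R.q w.1 j)^(2*k)) / (R.act v.1).card)^(2*k)

/-- `deg(P)`: the maximal number of facets through a vertex. -/
def degP (R : FacetRep d m) (V : Finset (E d)) : ℕ := V.sup fun v => (R.act v).card

end FacetRep

/-- `|U_s^{-1}|_2` where `U_s` is the matrix with rows `u_j^T`, `j ∈ s`: the supremum of `‖x‖`
over the set where the Euclidean norm of `U_s x` is at most `1`. -/
def invNormU {d m : ℕ} (u : Fin m → E d) (s : Finset (Fin m)) : ℝ :=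
  sSup {c | ∃ x : E d, Real.sqrt (∑ j ∈ s, (⟪u j, x⟫)^2) ≤ 1 ∧ c = ‖x‖}

/-- `α = max_{v ∈ vert(P)} |U_v^{-1}|_2`. -/
def alpha {d m : ℕ} (R : FacetRep d m) (V : Finset (E d)) : ℝ :=
  sSup {a | ∃ v ∈ V, a = invNormU R.u (R.act v)}

/-- The normal cone `N(Q,x) = {u : ⟨x,u⟩ = h(Q,u)}`. -/
def normalCone {d : ℕ} (Q : Set (E d)) (x : E d) : Set (E d) :=
  {u | ⟪u, x⟫ = supp Q u}

/-- `S` is an edge (a 1-dimensional face) of `P`. -/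
def IsEdgeOf {d : ℕ} (P S : Set (E d)) : Prop :=
  IsExposed ℝ P S ∧ Module.finrank ℝ ↥(vectorSpan ℝ S) = 1

end AverkovHenk

/-!
Every `f_k` is convex with nonnegative weights, so its sublevel set `S_k` is convex, and since
`f_k = 1` at the vertices it contains their convex hull `P`.

Conversely, evaluating `f_k` at a vertex `v` gives `1 = y_v + ∑_{u ≠ v} y_u g_{u,k}(v)`, where the
terms of `f_k` satisfy `g_{u,k}(u) = 1` (so `y_u ≤ 1`) and `g_{u,k}(v) → 0` for `u ≠ v`, because `v`
lies strictly inside some facet inequality active at `u`. Hence `y_v ≥ 1/2` for large `k`. If `x`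
violates some facet inequality by more than `ε`, the term of a vertex on that facet grows like
`(1 + ε)^{4k²}`, so `f_k(x) > 1`. Thus `P ⊆ S_k ⊆ P_ε` eventually, and `P_ε` lies in the
`O(ε)`-neighbourhood of `P`, as one sees by shrinking towards an interior point.
-/

open Filter Topology

lemma ConvexOn.finsetSum {𝕜 E ι : Type*} [Field 𝕜] [LinearOrder 𝕜] [IsStrictOrderedRing 𝕜]
    [AddCommGroup E] [Module 𝕜 E] {s : Set E} {t : Finset ι} {f : ι → E → 𝕜}
    (hs : Convex 𝕜 s) (hf : ∀ i ∈ t, ConvexOn 𝕜 s (f i)) :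
    ConvexOn 𝕜 s fun x => ∑ i ∈ t, f i x := by
  induction t using Finset.cons_induction with
  | empty => simpa using convexOn_const (0 : 𝕜) hs
  | cons i t hi ih =>
    simp only [Finset.sum_cons]
    exact (hf i (Finset.mem_cons_self i t)).add (ih fun j hj => hf j (Finset.mem_cons_of_mem hj))

lemma tendsto_mean_pow_pow_atTop_nhds_zero {ι : Type*} {s : Finset ι} {b : ι → ℝ}
    (hb : ∀ i ∈ s, 0 ≤ b i ∧ b i ≤ 1) (hlt : ∃ i ∈ s, b i < 1) :
    Tendsto (fun k : ℕ => ((∑ i ∈ s, b i ^ (2 * k)) / s.card) ^ (2 * k)) atTop (𝓝 0) := by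
  obtain ⟨i₀, hi₀, hbi₀⟩ := hlt
  have hcard : (0 : ℝ) < s.card := by exact_mod_cast Finset.card_pos.2 ⟨i₀, hi₀⟩
  set ρ := (∑ i ∈ s, b i ^ 2) / s.card
  have hρ0 : 0 ≤ ρ := by positivity
  have hρ1 : ρ < 1 := by
    rw [div_lt_one hcard]
    calc ∑ i ∈ s, b i ^ 2 < ∑ _i ∈ s, (1 : ℝ) :=
          Finset.sum_lt_sum (fun i hi => pow_le_one₀ (hb i hi).1 (hb i hi).2)
            ⟨i₀, hi₀, pow_lt_one₀ (hb i₀ hi₀).1 hbi₀ two_ne_zero⟩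
      _ = s.card := by simp
  have hmean_nonneg : ∀ k : ℕ, 0 ≤ (∑ i ∈ s, b i ^ (2 * k)) / s.card := fun k =>
    div_nonneg (Finset.sum_nonneg fun i _ => (even_two_mul k).pow_nonneg _) hcard.le
  have hmean : ∀ k ≥ 1, (∑ i ∈ s, b i ^ (2 * k)) / s.card ≤ ρ := fun k hk =>
    div_le_div_of_nonneg_right (Finset.sum_le_sum fun i hi =>
      pow_le_pow_of_le_one (hb i hi).1 (hb i hi).2 (by omega)) hcard.le
  have hlim : Tendsto (fun k : ℕ => (ρ ^ 2) ^ k) atTop (𝓝 0) :=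
    tendsto_pow_atTop_nhds_zero_of_lt_one (by positivity) (pow_lt_one₀ hρ0 hρ1 two_ne_zero)
  refine squeeze_zero' (Eventually.of_forall fun k => pow_nonneg (hmean_nonneg k) _) ?_ hlim
  filter_upwards [eventually_ge_atTop 1] with k hk
  rw [← pow_mul]
  exact pow_le_pow_left₀ (hmean_nonneg k) (hmean k hk) _

lemma Metric.tendsto_hausdorffDist_nhds_zero_of_subset {α ι : Type*} [PseudoMetricSpace α]
    {l : Filter ι} {S : ι → Set α} {P : Set α} (hPS : ∀ᶠ i in l, P ⊆ S i)
    (hS : ∀ ε > 0, ∀ᶠ i in l, ∀ x ∈ S i, infDist x P ≤ ε) :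
    Tendsto (fun i => hausdorffDist (S i) P) l (𝓝 0) := by
  rw [Metric.tendsto_nhds]
  intro ε hε
  filter_upwards [hPS, hS (ε / 2) (half_pos hε)] with i hPSi hSi
  have hle : hausdorffDist (S i) P ≤ ε / 2 := hausdorffDist_le_of_infDist (half_pos hε).le hSi
    fun x hx => (infDist_zero_of_mem (hPSi hx)).trans_le (half_pos hε).le
  rw [Real.dist_eq, sub_zero, abs_of_nonneg hausdorffDist_nonneg]
  linarith

namespace AverkovHenk

namespace FacetRep

variable {d m : ℕ} (R : FacetRep d m)

def gk (k : ℕ) (v x : E d) : ℝ :=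
  ((∑ j ∈ R.act v, (1 - R.q x j) ^ (2 * k)) / (R.act v).card) ^ (2 * k)

lemma fk_eq_sum_gk (V : Finset (E d)) (y : ↥V → ℝ) (k : ℕ) (x : E d) :
    R.fk V y k x = ∑ v : ↥V, y v * R.gk k v x := rfl

lemma mem_iff_forall_q_nonneg {x : E d} : x ∈ R.P ↔ ∀ j, 0 ≤ R.q x j := by
  rw [R.rep]; rfl

lemma q_nonneg {x : E d} (hx : x ∈ R.P) (j : Fin m) : 0 ≤ R.q x j :=
  R.mem_iff_forall_q_nonneg.1 hx j

lemma q_add_smul {x y : E d} {a b : ℝ} (hab : a + b = 1) (j : Fin m) :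
    R.q (a • x + b • y) j = a * R.q x j + b * R.q y j := by
  simp only [q, qf, inner_add_right, real_inner_smul_right]
  linear_combination (-(supp R.P (R.u j) / Metric.diam R.P)) * hab

lemma P_nonempty : R.P.Nonempty := R.fulldim.mono interior_subset

lemma P_nontrivial (hd : 0 < d) : R.P.Nontrivial := by
  have : Nonempty (Fin d) := ⟨⟨0, hd⟩⟩
  obtain ⟨z, hz⟩ := R.fulldim
  refine (eq_singleton_or_nontrivial (interior_subset hz)).resolve_left fun h => ?_
  rw [h, interior_singleton] at hz
  exact hz

lemma diam_pos (hd : 0 < d) : 0 < Metric.diam R.P :=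
  Metric.diam_pos (R.P_nontrivial hd) R.compact.isBounded

lemma q_le_one (hd : 0 < d) {x : E d} (hx : x ∈ R.P) (j : Fin m) : R.q x j ≤ 1 := by
  have hsupp : supp R.P (R.u j) ≤ ⟪R.u j, x⟫ + Metric.diam R.P := by
    refine csSup_le (R.P_nonempty.image _) ?_
    rintro - ⟨p, hp, rfl⟩
    have hdist : ‖p - x‖ ≤ Metric.diam R.P := by
      rw [← dist_eq_norm]; exact Metric.dist_le_diam_of_mem R.compact.isBounded hp hx
    have hinner : ⟪R.u j, p - x⟫ ≤ ‖p - x‖ := by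
      simpa [(R.facet j).1] using real_inner_le_norm (R.u j) (p - x)
    rw [inner_sub_right] at hinner
    linarith
  rw [q, qf, div_le_one (R.diam_pos hd)]
  linarith

lemma eq_of_forall_mem_act_q_eq_zero {v w : E d} (hv : v ∈ vertices R.P)
    (hw : ∀ j ∈ R.act v, R.q w j = 0) : w = v := by
  set line : ℝ → E d := fun t => (1 - t) • v + t • w
  have hline : ∀ t j, R.q (line t) j = (1 - t) * R.q v j + t * R.q w j := fun t j =>
    R.q_add_smul (sub_add_cancel 1 t) j
  -- Inequalities active at `v` stay active along the line, the others stay strict near `v`.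
  have hnear : ∀ᶠ t in 𝓝 (0 : ℝ), line t ∈ R.P := by
    simp only [R.mem_iff_forall_q_nonneg, hline, eventually_all]
    intro j
    rcases (R.q_nonneg hv.1 j).eq_or_lt with hj | hj
    · have hwj : R.q w j = 0 := hw j (Finset.mem_filter.2 ⟨Finset.mem_univ j, hj.symm⟩)
      exact Eventually.of_forall fun t => by simp [← hj, hwj]
    · have hcont : Continuous fun t : ℝ => (1 - t) * R.q v j + t * R.q w j := by fun_prop
      have := (hcont.tendsto 0).eventually_const_lt (by simpa using hj)
      exact this.mono fun t ht => ht.le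
  have hnear' : ∀ᶠ t in 𝓝 (0 : ℝ), line (-t) ∈ R.P := by
    simpa using (continuous_neg.tendsto' 0 0 neg_zero).eventually hnear
  obtain ⟨t, ⟨hpos, hneg⟩, ht⟩ := (((hnear.and hnear').filter_mono nhdsWithin_le_nhds).and
    (self_mem_nhdsWithin (s := Set.Ioi (0 : ℝ)))).exists
  have hmid : v ∈ openSegment ℝ (line t) (line (-t)) :=
    ⟨1 / 2, 1 / 2, one_half_pos, one_half_pos, by norm_num, by simp only [line]; module⟩
  have hvt : line t = v := hv.2 hpos hneg hmid
  have : t • (w - v) = 0 := by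
    rw [← sub_eq_zero.2 hvt]; simp only [line]; module
  exact sub_eq_zero.1 ((smul_eq_zero.1 this).resolve_left (ne_of_gt ht))

lemma act_nonempty (hd : 0 < d) {v : E d} (hv : v ∈ vertices R.P) : (R.act v).Nonempty := by
  have : Nonempty (Fin d) := ⟨⟨0, hd⟩⟩
  obtain ⟨e, he⟩ := exists_ne (0 : E d)
  by_contra hempty
  have := R.eq_of_forall_mem_act_q_eq_zero hv (w := v + e) fun j hj => (hempty ⟨j, hj⟩).elim
  exact he (by simpa using this)

lemma exists_mem_act_q_pos {u v : E d} (hu : u ∈ vertices R.P) (hv : v ∈ vertices R.P)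
    (hne : v ≠ u) : ∃ j ∈ R.act u, 0 < R.q v j := by
  by_contra! h
  exact hne (R.eq_of_forall_mem_act_q_eq_zero hu fun j hj =>
    le_antisymm (h j hj) (R.q_nonneg hv.1 j))

lemma exists_vertex_q_eq_zero (j : Fin m) : ∃ v ∈ vertices R.P, R.q v j = 0 := by
  set l : StrongDual ℝ (E d) := innerSL ℝ (R.u j)
  obtain ⟨x₀, hx₀, hmax⟩ := R.compact.exists_isMaxOn R.P_nonempty l.continuous.continuousOn
  have hface : IsExposed ℝ R.P (l.toExposed R.P) := ContinuousLinearMap.toExposed.isExposed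
  obtain ⟨v, hv⟩ := (hface.isCompact R.compact).extremePoints_nonempty ⟨x₀, hx₀, hmax⟩
  have hsupp : supp R.P (R.u j) = ⟪R.u j, v⟫ :=
    IsGreatest.csSup_eq ⟨⟨v, hv.1.1, rfl⟩, by rintro - ⟨p, hp, rfl⟩; exact hv.1.2 p hp⟩
  exact ⟨v, hface.isExtreme.extremePoints_subset_extremePoints hv, by simp [q, qf, hsupp]⟩

lemma convexHull_eq (V : Finset (E d)) (hV : (↑V : Set (E d)) = vertices R.P) :
    convexHull ℝ (↑V : Set (E d)) = R.P := by
  rw [← (V.finite_toSet.isClosed_convexHull ℝ).closure_eq, hV, vertices,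
    closure_convexHull_extremePoints R.compact R.convex]

lemma gk_nonneg (k : ℕ) (v x : E d) : 0 ≤ R.gk k v x := (even_two_mul k).pow_nonneg _

lemma gk_self (hd : 0 < d) (k : ℕ) {v : E d} (hv : v ∈ vertices R.P) : R.gk k v v = 1 := by
  have hcard : ((R.act v).card : ℝ) ≠ 0 := by
    exact_mod_cast (Finset.card_pos.2 (R.act_nonempty hd hv)).ne'
  have hsum : ∑ j ∈ R.act v, (1 - R.q v j) ^ (2 * k) = (R.act v).card := by
    rw [Finset.card_eq_sum_ones, Nat.cast_sum, Nat.cast_one]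
    exact Finset.sum_congr rfl fun j hj => by simp [(Finset.mem_filter.1 hj).2]
  rw [gk, hsum, div_self hcard, one_pow]

lemma tendsto_gk_of_ne (hd : 0 < d) {u v : E d} (hu : u ∈ vertices R.P)
    (hv : v ∈ vertices R.P) (hne : v ≠ u) :
    Tendsto (fun k => R.gk k u v) atTop (𝓝 0) :=
  tendsto_mean_pow_pow_atTop_nhds_zero
    (fun j _ => ⟨by linarith [R.q_le_one hd hv.1 j], by linarith [R.q_nonneg hv.1 j]⟩)
    ((R.exists_mem_act_q_pos hu hv hne).imp fun j ⟨hj, hpos⟩ => ⟨hj, by linarith⟩)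

lemma one_add_pow_div_pow_le_gk {v x : E d} {j : Fin m} (hj : j ∈ R.act v) {ε : ℝ} (hε : 0 ≤ ε)
    (hx : R.q x j ≤ -ε) (k : ℕ) : ((1 + ε) ^ (2 * k) / m) ^ (2 * k) ≤ R.gk k v x := by
  have hcard : (0 : ℝ) < (R.act v).card := by exact_mod_cast Finset.card_pos.2 ⟨j, hj⟩
  have hcard_le : ((R.act v).card : ℝ) ≤ m := by
    exact_mod_cast (Finset.card_le_univ (R.act v)).trans_eq (Fintype.card_fin m)
  have hterm : (1 + ε) ^ (2 * k) ≤ ∑ i ∈ R.act v, (1 - R.q x i) ^ (2 * k) :=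
    (pow_le_pow_left₀ (by linarith) (by linarith) _).trans
      (Finset.single_le_sum (f := fun i => (1 - R.q x i) ^ (2 * k))
        (fun i _ => (even_two_mul k).pow_nonneg _) hj)
  exact pow_le_pow_left₀ (by positivity)
    (div_le_div₀ (Finset.sum_nonneg fun i _ => (even_two_mul k).pow_nonneg _) hterm hcard
      hcard_le) _

section

variable {V : Finset (E d)} {y : ↥V → ℝ} {k : ℕ}

lemma mul_gk_le_fk (hy : ∀ v, 0 ≤ y v) (v : ↥V) (x : E d) :
    y v * R.gk k v x ≤ R.fk V y k x :=
  Finset.single_le_sum (f := fun u : ↥V => y u * R.gk k u x)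
    (fun u _ => mul_nonneg (hy u) (R.gk_nonneg k u x)) (Finset.mem_univ v)

lemma convexOn_fk (hy : ∀ v, 0 ≤ y v) : ConvexOn ℝ univ (R.fk V y k) := by
  have hterm : ∀ j, ConvexOn ℝ univ fun x => (1 - R.q x j) ^ (2 * k) := fun j =>
    ⟨convex_univ, fun x _ x' _ a b ha hb hab => by
      have := (even_two_mul k).convexOn_pow.2 (mem_univ (1 - R.q x j)) (mem_univ (1 - R.q x' j))
        ha hb hab
      simp only [smul_eq_mul] at this ⊢
      rw [R.q_add_smul hab]
      convert this using 2
      linear_combination -hab⟩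
  refine ConvexOn.finsetSum convex_univ fun v _ => (ConvexOn.pow ?_ ?_ _).smul (hy v)
  · exact (ConvexOn.finsetSum (t := R.act v) convex_univ fun j _ => hterm j).smul
      (inv_nonneg.2 (Nat.cast_nonneg (R.act v).card)) |>.congr fun x _ => by
        simp only [smul_eq_mul, div_eq_inv_mul]
  · exact fun x _ => div_nonneg (Finset.sum_nonneg fun j _ => (even_two_mul k).pow_nonneg _)
      (Nat.cast_nonneg _)

lemma subset_setOf_fk_le_one (hV : (↑V : Set (E d)) = vertices R.P) (hy : ∀ v, 0 ≤ y v)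
    (hfk : ∀ w : ↥V, R.fk V y k w = 1) : R.P ⊆ {x | R.fk V y k x ≤ 1} := by
  intro x hx
  rw [← R.convexHull_eq V hV] at hx
  obtain ⟨w, hwV, hle⟩ := (R.convexOn_fk hy).exists_ge_of_mem_convexHull (subset_univ _) hx
  exact hle.trans_eq (hfk ⟨w, hwV⟩)

lemma le_one_of_fk_eq_one (hd : 0 < d) (hV : (↑V : Set (E d)) = vertices R.P)
    (hy : ∀ v, 0 ≤ y v) (hfk : ∀ w : ↥V, R.fk V y k w = 1) (v : ↥V) : y v ≤ 1 := by
  have hvert : (v : E d) ∈ vertices R.P := hV ▸ v.2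
  simpa [R.gk_self hd k hvert, hfk v] using R.mul_gk_le_fk (k := k) hy v v

end

lemma exists_forall_le_q (hd : 0 < d) : ∃ z, ∃ δ > 0, ∀ j, δ ≤ R.q z j := by
  obtain ⟨z, hz⟩ := R.fulldim
  obtain ⟨r, hr, hball⟩ := Metric.isOpen_iff.1 isOpen_interior z hz
  have hD := R.diam_pos hd
  refine ⟨z, r / 2 / Metric.diam R.P, by positivity, fun j => ?_⟩
  have hu : ‖R.u j‖ = 1 := (R.facet j).1
  have hmem : z + (r / 2) • R.u j ∈ R.P := interior_subset <| hball <| by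
    simp [norm_smul, hu, abs_of_pos hr, half_lt_self hr]
  have hq : R.q (z + (r / 2) • R.u j) j = R.q z j - r / 2 / Metric.diam R.P := by
    simp only [q, qf, inner_add_right, real_inner_smul_right, real_inner_self_eq_norm_sq, hu]
    ring
  linarith [R.q_nonneg hmem j]

lemma exists_infDist_le_of_mem_Peps (hd : 0 < d) :
    ∃ C > 0, ∀ ε ≥ 0, ∀ x ∈ R.Peps ε, infDist x R.P ≤ C * ε := by
  obtain ⟨z, δ, hδ, hz⟩ := R.exists_forall_le_q hd
  have hzP : z ∈ R.P := R.mem_iff_forall_q_nonneg.2 fun j => hδ.le.trans (hz j)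
  refine ⟨Metric.diam R.P / δ, div_pos (R.diam_pos hd) hδ, fun ε hε x hx => ?_⟩
  -- Shrink `x` towards `z` until the slack `δ` at `z` absorbs the violation `ε` at `x`.
  set t := δ / (δ + ε) with ht_def
  have ht₀ : 0 ≤ t := div_nonneg hδ.le (by linarith)
  have ht₁ : 0 ≤ 1 - t := sub_nonneg.2 (div_le_one_of_le₀ (by linarith) (by linarith))
  have hbal : (1 - t) * δ = t * ε := by rw [ht_def]; field_simp; ring
  have hpP : (1 - t) • z + t • x ∈ R.P := R.mem_iff_forall_q_nonneg.2 fun j => by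
    rw [R.q_add_smul (sub_add_cancel 1 t)]
    linarith [mul_le_mul_of_nonneg_left (hz j) ht₁, mul_le_mul_of_nonneg_left (hx j) ht₀]
  have hzp : t * ‖x - z‖ ≤ Metric.diam R.P := by
    have := Metric.dist_le_diam_of_mem R.compact.isBounded hpP hzP
    rwa [dist_eq_norm, show (1 - t) • z + t • x - z = t • (x - z) by module, norm_smul,
      Real.norm_of_nonneg ht₀] at this
  calc infDist x R.P ≤ dist x ((1 - t) • z + t • x) := infDist_le_dist_of_mem hpP
    _ = (1 - t) * ‖x - z‖ := by
      rw [dist_eq_norm, show x - ((1 - t) • z + t • x) = (1 - t) • (x - z) by module, norm_smul,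
        Real.norm_of_nonneg ht₁]
    _ ≤ Metric.diam R.P / δ * ε := by
      rw [div_mul_eq_mul_div, le_div_iff₀ hδ]
      calc (1 - t) * ‖x - z‖ * δ = ε * (t * ‖x - z‖) := by linear_combination ‖x - z‖ * hbal
        _ ≤ ε * Metric.diam R.P := by gcongr
        _ = Metric.diam R.P * ε := mul_comm _ _

variable {V : Finset (E d)}

lemma eventually_forall_half_le (hd : 0 < d) (hV : (↑V : Set (E d)) = vertices R.P)
    {y : ℕ → ↥V → ℝ}
    (hy : ∀ᶠ k in atTop, (∀ v, 0 ≤ y k v) ∧ ∀ w : ↥V, R.fk V (y k) k w = 1) :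
    ∀ᶠ k in atTop, ∀ v, 1 / 2 ≤ y k v := by
  have hvert : ∀ u : ↥V, (u : E d) ∈ vertices R.P := fun u => hV ▸ u.2
  rw [eventually_all]
  intro v
  have hoff : Tendsto (fun k => ∑ u ∈ univ.erase v, R.gk k u v) atTop (𝓝 0) := by
    simpa using tendsto_finsetSum (univ.erase v) fun u hu => R.tendsto_gk_of_ne hd (hvert u)
      (hvert v) fun h => Finset.ne_of_mem_erase hu (Subtype.ext h.symm)
  filter_upwards [hy, hoff.eventually (ge_mem_nhds (by norm_num : (0 : ℝ) < 1 / 2))]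
    with k ⟨hy0, hfk⟩ hsmall
  have hsplit : y k v + ∑ u ∈ univ.erase v, y k u * R.gk k u v = 1 := by
    rw [← hfk v, fk_eq_sum_gk, ← Finset.add_sum_erase _ _ (mem_univ v),
      R.gk_self hd k (hvert v), mul_one]
  have hle : ∑ u ∈ univ.erase v, y k u * R.gk k u v ≤ ∑ u ∈ univ.erase v, R.gk k u v :=
    Finset.sum_le_sum fun u _ =>
      mul_le_of_le_one_left (R.gk_nonneg k u v) (R.le_one_of_fk_eq_one hd hV hy0 hfk u)
  linarith

lemma eventually_setOf_fk_le_one_subset_Peps (hV : (↑V : Set (E d)) = vertices R.P)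
    {y : ℕ → ↥V → ℝ} (hy : ∀ᶠ k in atTop, ∀ v, 1 / 2 ≤ y k v) {ε : ℝ} (hε : 0 < ε) :
    ∀ᶠ k in atTop, {x | R.fk V (y k) k x ≤ 1} ⊆ R.Peps ε := by
  have hgrow : ∀ᶠ k : ℕ in atTop, 4 * (m : ℝ) ≤ (1 + ε) ^ (2 * k) := by
    simp only [pow_mul]
    exact (tendsto_pow_atTop_atTop_of_one_lt (by nlinarith)).eventually_ge_atTop _
  filter_upwards [hy, hgrow, eventually_ge_atTop 1] with k hyk hgrowk hk x hx j
  by_contra! hj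
  obtain ⟨v, hv, hvj⟩ := R.exists_vertex_q_eq_zero j
  have hvV : v ∈ V := by rw [← Finset.mem_coe, hV]; exact hv
  have hmean : 4 ≤ (1 + ε) ^ (2 * k) / m := by
    rwa [le_div_iff₀ (by exact_mod_cast j.pos)]
  have hg : 4 ≤ R.gk k v x :=
    hmean.trans <| (le_self_pow₀ (by linarith) (by omega)).trans <|
      R.one_add_pow_div_pow_le_gk (Finset.mem_filter.2 ⟨mem_univ j, hvj⟩) hε.le hj.le k
  have hfk_gt : 1 < R.fk V (y k) k x :=
    calc (1 : ℝ) < 1 / 2 * 4 := by norm_num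
      _ ≤ y k ⟨v, hvV⟩ * R.gk k v x :=
        mul_le_mul (hyk _) hg (by norm_num) (one_half_pos.trans_le (hyk _)).le
      _ ≤ R.fk V (y k) k x :=
        R.mul_gk_le_fk (fun u => (one_half_pos.trans_le (hyk u)).le) ⟨v, hvV⟩ x
  exact hfk_gt.not_ge hx

end FacetRep

theorem statement8 (d m : ℕ) (hd : 2 ≤ d) (R : FacetRep d m)
    (V : Finset (E d)) (hV : (↑V : Set (E d)) = vertices R.P)
    (k₀ : ℕ) (y : ℕ → ↥V → ℝ)
    (hy : ∀ k ≥ k₀, (∀ v, 0 < y k v) ∧ ∀ w : ↥V, R.fk V (y k) k w.1 = 1) :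
    (∀ k ≥ k₀, R.P ⊆ {x : E d | R.fk V (y k) k x ≤ 1}) ∧
      Filter.Tendsto (fun k => Metric.hausdorffDist {x : E d | R.fk V (y k) k x ≤ 1} R.P)
        Filter.atTop (nhds 0) := by
  have hd₀ : 0 < d := by omega
  have hP : ∀ k ≥ k₀, R.P ⊆ {x | R.fk V (y k) k x ≤ 1} := fun k hk =>
    R.subset_setOf_fk_le_one hV (fun v => ((hy k hk).1 v).le) (hy k hk).2
  have hhalf : ∀ᶠ k in atTop, ∀ v, 1 / 2 ≤ y k v :=
    R.eventually_forall_half_le hd₀ hV <| (eventually_ge_atTop k₀).mono fun k hk =>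
      ⟨fun v => ((hy k hk).1 v).le, (hy k hk).2⟩
  obtain ⟨C, hC, hnear⟩ := R.exists_infDist_le_of_mem_Peps hd₀
  refine ⟨hP, tendsto_hausdorffDist_nhds_zero_of_subset ((eventually_ge_atTop k₀).mono hP)
    fun ε hε => ?_⟩
  filter_upwards [R.eventually_setOf_fk_le_one_subset_Peps hV hhalf (div_pos hε hC)]
    with k hk x hx
  calc infDist x R.P ≤ C * (ε / C) := hnear _ (div_pos hε hC).le x (hk hx)
    _ = ε := mul_div_cancel₀ ε hC.ne'

end AverkovHenk
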